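/- Let T > 0, let N be a positive integer with τ = T/N ≤ 1, let h > 0, and let D = diag(d_1,…,d_M) with all d_i > 0. Suppose vectors u^0 = φ, u^1, …, u^N ∈ ℝ^M and f^{1/2}, …, f^{N−1/2} ∈ ℝ^M satisfy, for n = 1,…,N, (u^n − u^{n−1})/τ = (1/(2h^α))·D·G_α·(u^{n−1} + u^n) + f^{n−1/2}. Then for every n = 1,…,N: ‖u^n‖²_{D⁻¹} ≤ exp(2T)·‖φ‖²_{D⁻¹} + (exp(2T) − 1)·max_{1≤k≤n} ‖f^{k−1/2}‖²_{D⁻¹}, where ‖w‖²_{D⁻¹} = h·wᵀD⁻¹w. -/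

import Mathlib

open Matrix

/-- The Grünwald–Letnikov coefficients `g_k^{(α)}`. -/
noncomputable def gcoef (α : ℝ) : ℕ → ℝ
  | 0 => 1
  | (k+1) => (1 - (α + 1) / (k + 1 : ℕ)) * gcoef α k

/-- The WSGD coefficients `w_k^{(α)}`. -/
noncomputable def wcoef (α : ℝ) : ℕ → ℝ
  | 0 => α / 2 * gcoef α 0
  | (k+1) => α / 2 * gcoef α (k+1) + (2 - α) / 2 * gcoef α k

/-- The `M × M` lower-Hessenberg Toeplitz matrix `G_α`. -/
noncomputable def Gmat (α : ℝ) (M : ℕ) : Matrix (Fin M) (Fin M) ℝ :=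
  Matrix.of fun i j => if (j : ℕ) ≤ (i : ℕ) + 1 then wcoef α ((i : ℕ) + 1 - (j : ℕ)) else 0

/-!
Testing the scheme against `uⁿ⁻¹ + uⁿ` in the `D⁻¹`-weighted inner product turns the time
difference into `‖uⁿ‖² − ‖uⁿ⁻¹‖²` and, as `D⁻¹D = I`, the diffusion term into
`(1/(2hᵅ)) xᵀ G_α x`. This is `≤ 0`: the symmetric matrix `G_α + G_αᵀ` has nonnegative
off-diagonal entries (`w₀ + w₂ ≥ 0`, `w_k ≥ 0` for `k ≥ 3`) and nonpositive row sums, because the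
partial sums `∑_{k ≤ m} w_k` are, by Pascal's rule, nonnegative combinations of
`g^{(α-1)}_m, g^{(α-1)}_{m-1}`, both negative for `m ≥ 2`. Young's inequality for the source term
then gives `(2 − τ)‖uⁿ‖² ≤ (2 + τ)‖uⁿ⁻¹‖² + 2τ‖fⁿ⁻¹ᐟ²‖²`, and a discrete Gronwall argument with
`(2 + τ)/(2 − τ) ≤ 1 + 2τ ≤ e^{2τ}` (as `τ ≤ 1`) concludes.
-/

open Finset
section Coefficients

variable {α β : ℝ}

lemma gcoef_succ (α : ℝ) (k : ℕ) :
    gcoef α (k + 1) = (1 - (α + 1) / ((k : ℝ) + 1)) * gcoef α k := by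
  rw [gcoef]; push_cast; ring

@[simp] lemma gcoef_zero (α : ℝ) : gcoef α 0 = 1 := rfl

@[simp] lemma gcoef_one (α : ℝ) : gcoef α 1 = -α := by
  rw [gcoef_succ, gcoef_zero]; push_cast; ring

lemma gcoef_neg (hβ0 : 0 < β) (hβ1 : β < 1) {m : ℕ} (hm : 1 ≤ m) : gcoef β m < 0 := by
  induction m, hm using Nat.le_induction with
  | base => rw [gcoef_one]; linarith
  | succ k hk ih =>
    have hfac : 0 < 1 - (β + 1) / ((k : ℝ) + 1) := by
      rw [sub_pos, div_lt_one (by positivity)]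
      have : (1 : ℝ) ≤ k := by exact_mod_cast hk
      linarith
    rw [gcoef_succ]
    exact mul_neg_of_pos_of_neg hfac ih

lemma gcoef_pos (hα1 : 1 < α) (hα2 : α < 2) {m : ℕ} (hm : 2 ≤ m) : 0 < gcoef α m := by
  induction m, hm using Nat.le_induction with
  | base => rw [gcoef_succ, gcoef_one]; norm_num; nlinarith
  | succ k hk ih =>
    have hfac : 0 < 1 - (α + 1) / ((k : ℝ) + 1) := by
      rw [sub_pos, div_lt_one (by positivity)]
      have : (2 : ℝ) ≤ k := by exact_mod_cast hk
      linarith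
    rw [gcoef_succ]
    exact mul_pos hfac ih

/-- Pascal's rule for the coefficients `g_k^{(α)} = (-1)^k (α choose k)`. -/
lemma gcoef_succ_eq_sub (α : ℝ) (k : ℕ) :
    gcoef α (k + 1) = gcoef (α - 1) (k + 1) - gcoef (α - 1) k := by
  induction k with
  | zero => simp
  | succ k ih =>
    rw [gcoef_succ α (k + 1), ih, gcoef_succ (α - 1) (k + 1), gcoef_succ (α - 1) k]
    push_cast
    field_simp
    ring

lemma sum_range_wcoef (α : ℝ) (m : ℕ) :
    ∑ k ∈ range (m + 2), wcoef α k =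
      α / 2 * gcoef (α - 1) (m + 1) + (2 - α) / 2 * gcoef (α - 1) m := by
  induction m with
  | zero => simp [sum_range_succ, wcoef]; ring
  | succ m ih =>
    rw [sum_range_succ, ih, wcoef, gcoef_succ_eq_sub α (m + 1), gcoef_succ_eq_sub α m]
    ring

lemma sum_range_wcoef_nonpos (hα1 : 1 < α) (hα2 : α < 2) {m : ℕ} (hm : 3 ≤ m) :
    ∑ k ∈ range m, wcoef α k ≤ 0 := by
  obtain ⟨m, rfl⟩ := Nat.exists_eq_add_of_le' hm
  rw [sum_range_wcoef]
  have h1 := gcoef_neg (β := α - 1) (by linarith) (by linarith) (m := m + 2) (by omega)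
  have h2 := gcoef_neg (β := α - 1) (by linarith) (by linarith) (m := m + 1) (by omega)
  nlinarith

lemma wcoef_one_nonpos (hα : 1 ≤ α) : wcoef α 1 ≤ 0 := by
  have h : wcoef α 1 = -((α - 1) * (α + 2)) / 2 := by simp [wcoef]; ring
  rw [h]
  have : 0 ≤ α - 1 := by linarith
  have : 0 ≤ (α - 1) * (α + 2) := by positivity
  linarith

lemma wcoef_nonneg (hα1 : 1 < α) (hα2 : α < 2) {k : ℕ} (hk : 3 ≤ k) : 0 ≤ wcoef α k := by
  obtain ⟨k, rfl⟩ := Nat.exists_eq_add_of_le' hk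
  have h1 := gcoef_pos hα1 hα2 (m := k + 3) (by omega)
  have h2 := gcoef_pos hα1 hα2 (m := k + 2) (by omega)
  rw [wcoef]
  nlinarith

lemma wcoef_zero_add_wcoef_two_nonneg (hα : 1 ≤ α) : 0 ≤ wcoef α 0 + wcoef α 2 := by
  have h : wcoef α 0 + wcoef α 2 = α * (α - 1) * (α + 2) / 4 := by
    simp [wcoef, gcoef_succ]; ring
  rw [h]
  have : 0 ≤ α - 1 := by linarith
  positivity

end Coefficients

namespace Matrix

variable {ι : Type*} [Fintype ι]

lemma dotProduct_mulVec_comm_of_isHermitian {C : Matrix ι ι ℝ} (hC : C.IsHermitian)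
    (a b : ι → ℝ) : b ⬝ᵥ (C *ᵥ a) = a ⬝ᵥ (C *ᵥ b) := by
  have hCt : Cᵀ = C := by rw [← conjTranspose_eq_transpose_of_trivial]; exact hC
  rw [dotProduct_mulVec, ← mulVec_transpose, hCt, dotProduct_comm]

lemma PosSemidef.two_mul_dotProduct_mulVec_le {C : Matrix ι ι ℝ} (hC : C.PosSemidef)
    (a b : ι → ℝ) : 2 * (a ⬝ᵥ (C *ᵥ b)) ≤ a ⬝ᵥ (C *ᵥ a) + b ⬝ᵥ (C *ᵥ b) := by
  have h := hC.dotProduct_mulVec_nonneg (a - b)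
  rw [star_trivial, mulVec_sub, sub_dotProduct, dotProduct_sub, dotProduct_sub,
    dotProduct_mulVec_comm_of_isHermitian hC.isHermitian a b] at h
  linarith

lemma dotProduct_mulVec_nonpos_of_sum_nonpos {S : Matrix ι ι ℝ} (hS : S.IsSymm)
    (hoff : ∀ i j, i ≠ j → 0 ≤ S i j) (hrow : ∀ i, ∑ j, S i j ≤ 0) (v : ι → ℝ) :
    v ⬝ᵥ (S *ᵥ v) ≤ 0 :=
  calc v ⬝ᵥ (S *ᵥ v) = ∑ i, ∑ j, S i j * (v i * v j) := by
        simp only [dotProduct, mulVec, mul_sum]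
        exact sum_congr rfl fun i _ => sum_congr rfl fun j _ => by ring
    _ ≤ ∑ i, ∑ j, S i j * ((v i ^ 2 + v j ^ 2) / 2) := by
        refine sum_le_sum fun i _ => sum_le_sum fun j _ => ?_
        rcases eq_or_ne i j with rfl | hij
        · exact le_of_eq (by ring)
        · nlinarith [hoff i j hij, sq_nonneg (v i - v j)]
    _ = ∑ i, (∑ j, S i j) * v i ^ 2 := by
        have hswap : ∑ i, ∑ j, S i j * v j ^ 2 = ∑ i, ∑ j, S i j * v i ^ 2 := by
          rw [sum_comm]; simp only [hS.apply]
        have hsplit : ∀ i j, S i j * ((v i ^ 2 + v j ^ 2) / 2)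
            = (S i j * v i ^ 2 + S i j * v j ^ 2) / 2 := fun i j => by ring
        simp only [hsplit, ← sum_div, sum_add_distrib, hswap, sum_mul]
        ring
    _ ≤ 0 := sum_nonpos fun i _ => mul_nonpos_of_nonpos_of_nonneg (hrow i) (sq_nonneg _)

theorem PosSemidef.crankNicolson_energy_le {C A : Matrix ι ι ℝ} (hC : C.PosSemidef)
    (hA : ∀ x, x ⬝ᵥ ((C * A) *ᵥ x) ≤ 0) {τ : ℝ} (hτ : 0 < τ) {u v f : ι → ℝ}
    (hscheme : (1 / τ) • (v - u) = A *ᵥ (u + v) + f) :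
    (2 - τ) * (v ⬝ᵥ (C *ᵥ v)) ≤ (2 + τ) * (u ⬝ᵥ (C *ᵥ u)) + 2 * τ * (f ⬝ᵥ (C *ᵥ f)) := by
  have hcomm := dotProduct_mulVec_comm_of_isHermitian hC.isHermitian
  have hincr : v - u = τ • (A *ᵥ (u + v) + f) := by
    rw [← hscheme, smul_smul, mul_one_div_cancel hτ.ne', one_smul]
  have henergy : (u + v) ⬝ᵥ (C *ᵥ (v - u)) = v ⬝ᵥ (C *ᵥ v) - u ⬝ᵥ (C *ᵥ u) := by
    simp only [mulVec_sub, add_dotProduct, dotProduct_sub, hcomm v u]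
    ring
  have hsource : (u + v) ⬝ᵥ (C *ᵥ (v - u)) ≤ τ * ((u + v) ⬝ᵥ (C *ᵥ f)) := by
    rw [hincr, mulVec_smul, dotProduct_smul, smul_eq_mul, mulVec_add, dotProduct_add,
      mulVec_mulVec, mul_add]
    linarith [mul_nonpos_of_nonneg_of_nonpos hτ.le (hA (u + v))]
  have hyoung_u := mul_le_mul_of_nonneg_left (hC.two_mul_dotProduct_mulVec_le u f) hτ.le
  have hyoung_v := mul_le_mul_of_nonneg_left (hC.two_mul_dotProduct_mulVec_le v f) hτ.le
  rw [henergy, add_dotProduct] at hsource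
  linarith

end Matrix

lemma discrete_gronwall_pow {Q F : ℕ → ℝ} {a b B : ℝ} (ha : 0 < a) (hab : a ≤ b) {n : ℕ}
    (hstep : ∀ k < n, a * Q (k + 1) ≤ b * Q k + (b - a) * F (k + 1))
    (hF : ∀ k < n, F (k + 1) ≤ B) :
    Q n ≤ (b / a) ^ n * Q 0 + ((b / a) ^ n - 1) * B := by
  induction n with
  | zero => simp
  | succ n ih =>
    have hr : 1 ≤ b / a := (one_le_div ha).2 hab
    have hQ : Q n ≤ (b / a) ^ n * Q 0 + ((b / a) ^ n - 1) * B :=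
      ih (fun k hk => hstep k (by omega)) (fun k hk => hF k (by omega))
    have hQ' : Q (n + 1) ≤ b / a * Q n + (b / a - 1) * F (n + 1) := by
      have hdiv : b / a * Q n + (b / a - 1) * F (n + 1) =
          (b * Q n + (b - a) * F (n + 1)) / a := by
        field_simp
      rw [hdiv, le_div_iff₀ ha]
      linarith [hstep n n.lt_succ_self]
    have hFB := hF n n.lt_succ_self
    calc Q (n + 1) ≤ b / a * Q n + (b / a - 1) * F (n + 1) := hQ'
      _ ≤ b / a * ((b / a) ^ n * Q 0 + ((b / a) ^ n - 1) * B) + (b / a - 1) * B := by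
        gcongr
      _ = (b / a) ^ (n + 1) * Q 0 + ((b / a) ^ (n + 1) - 1) * B := by ring

lemma two_add_div_two_sub_pow_le_exp {τ : ℝ} (h0 : 0 ≤ τ) (h1 : τ ≤ 1) (n : ℕ) :
    ((2 + τ) / (2 - τ)) ^ n ≤ Real.exp (2 * (n * τ)) :=
  calc ((2 + τ) / (2 - τ)) ^ n ≤ Real.exp (2 * τ) ^ n := by
        gcongr
        · exact div_nonneg (by linarith) (by linarith)
        · calc (2 + τ) / (2 - τ) ≤ 2 * τ + 1 := by rw [div_le_iff₀ (by linarith)]; nlinarith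
            _ ≤ Real.exp (2 * τ) := Real.add_one_le_exp _
    _ = Real.exp (2 * (n * τ)) := by rw [← Real.exp_nat_mul]; ring_nf

section Gmat

variable {α : ℝ} {M : ℕ}

lemma Gmat_apply (i j : Fin M) :
    Gmat α M i j = if (j : ℕ) ≤ i + 1 then wcoef α (i + 1 - j) else 0 := rfl

/-- `G_α` is persymmetric: `J G_α J = G_αᵀ` for the exchange matrix `J`. -/
lemma Gmat_rev_apply (i j : Fin M) : Gmat α M j.rev i = Gmat α M i.rev j := by
  simp only [Gmat_apply, Fin.val_rev]
  have hi := i.isLt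
  have hj := j.isLt
  by_cases h : (i : ℕ) ≤ M - (j + 1) + 1
  · rw [if_pos h, if_pos (by omega), show M - (j + 1) + 1 - i = M - (i + 1) + 1 - j by omega]
  · rw [if_neg h, if_neg (by omega)]

lemma sum_Gmat_row (i : Fin M) :
    ∑ j, Gmat α M i j = ∑ k ∈ Icc (i + 2 - M) (i + 1), wcoef α k := by
  simp only [Gmat_apply]
  rw [Fin.sum_univ_eq_sum_range (fun j => if j ≤ (i : ℕ) + 1 then wcoef α (i + 1 - j) else 0),
    ← sum_filter]
  have hi := i.isLt
  refine sum_nbij' (fun j => i + 1 - j) (fun k => i + 1 - k) ?_ ?_ ?_ ?_ fun _ _ => rfl <;>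
    intro a ha <;> simp only [mem_filter, mem_range, mem_Icc] at ha ⊢ <;> omega

lemma sum_Gmat_col (i : Fin M) : ∑ j, Gmat α M j i = ∑ j, Gmat α M i.rev j := by
  rw [← Equiv.sum_comp Fin.revPerm]
  exact sum_congr rfl fun j _ => Gmat_rev_apply i j

lemma sum_Gmat_add_transpose_nonpos (hα1 : 1 < α) (hα2 : α < 2) (i : Fin M) :
    ∑ j, (Gmat α M i j + Gmat α M j i) ≤ 0 := by
  have hIcc : ∀ a b, a ≤ b + 1 →
      ∑ k ∈ Icc a b, wcoef α k = ∑ k ∈ range (b + 1), wcoef α k - ∑ k ∈ range a, wcoef α k :=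
    fun a b hab => by rw [← Ico_add_one_right_eq_Icc, sum_Ico_eq_sub _ hab]
  have hi := i.isLt
  rw [sum_add_distrib, sum_Gmat_col, sum_Gmat_row, sum_Gmat_row, Fin.val_rev,
    hIcc _ _ (by omega), hIcc _ _ (by omega)]
  have hw1 := wcoef_one_nonpos hα1.le
  have hP := fun m => sum_range_wcoef_nonpos (m := m) hα1 hα2
  have hS1 : ∑ k ∈ range 1, wcoef α k = wcoef α 0 := by simp
  have hS2 : ∑ k ∈ range 2, wcoef α k = wcoef α 0 + wcoef α 1 := by simp [sum_range_succ]
  -- In the interior both sums are partial sums `∑_{k ≤ m} w_k` with `m ≥ 2`; at a boundary row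
  -- they add up to `w₁ + ∑_{k ≤ M} w_k`, or to `2 w₁` when `M = 1`.
  rcases Nat.eq_zero_or_pos (i : ℕ) with hi0 | hi0 <;>
    rcases Nat.lt_or_ge ((i : ℕ) + 1) M with hiM | hiM
  · rw [hi0, show 0 + 2 - M = 0 by omega, show M - (0 + 1) + 2 - M = 1 by omega,
      show M - (0 + 1) + 1 + 1 = M + 1 by omega]
    simp only [hS1, hS2, sum_range_zero]
    linarith [hP (M + 1) (by omega)]
  · rw [hi0, show 0 + 2 - M = 1 by omega, show M - (0 + 1) + 2 - M = 1 by omega,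
      show M - (0 + 1) + 1 + 1 = 2 by omega]
    simp only [hS1, hS2]
    linarith
  · rw [show (i : ℕ) + 2 - M = 0 by omega, show M - (i + 1) + 2 - M = 0 by omega]
    simp only [sum_range_zero]
    linarith [hP (i + 1 + 1) (by omega), hP (M - (i + 1) + 1 + 1) (by omega)]
  · rw [show (i : ℕ) + 2 - M = 1 by omega, show M - (i + 1) + 2 - M = 0 by omega,
      show M - (i + 1) + 1 + 1 = 2 by omega]
    simp only [hS1, hS2, sum_range_zero]
    linarith [hP (i + 1 + 1) (by omega)]

lemma Gmat_add_transpose_nonneg (hα1 : 1 < α) (hα2 : α < 2) {i j : Fin M} (hij : i ≠ j) :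
    0 ≤ Gmat α M i j + Gmat α M j i := by
  have key : ∀ a b : Fin M, a < b → 0 ≤ Gmat α M a b + Gmat α M b a := by
    intro a b hab
    rw [Fin.lt_def] at hab
    simp only [Gmat_apply]
    rcases Nat.lt_or_ge ((a : ℕ) + 1) b with hgap | hnext
    · rw [if_neg (by omega), if_pos (by omega), zero_add]
      exact wcoef_nonneg hα1 hα2 (by omega)
    · rw [if_pos hnext, if_pos (by omega), show (a : ℕ) + 1 - b = 0 by omega,
        show (b : ℕ) + 1 - a = 2 by omega]
      exact wcoef_zero_add_wcoef_two_nonneg hα1.le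
  rcases hij.lt_or_gt with h | h
  · exact key i j h
  · rw [add_comm]; exact key j i h

lemma dotProduct_Gmat_mulVec_nonpos (hα1 : 1 < α) (hα2 : α < 2) (v : Fin M → ℝ) :
    v ⬝ᵥ (Gmat α M *ᵥ v) ≤ 0 := by
  have hsym : v ⬝ᵥ ((Gmat α M + (Gmat α M)ᵀ) *ᵥ v) = 2 * (v ⬝ᵥ (Gmat α M *ᵥ v)) := by
    rw [add_mulVec, dotProduct_add, mulVec_transpose, dotProduct_comm v (v ᵥ* _),
      ← dotProduct_mulVec, two_mul]
  have h := dotProduct_mulVec_nonpos_of_sum_nonpos (S := Gmat α M + (Gmat α M)ᵀ)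
    (isSymm_add_transpose_self _) (fun i j hij => Gmat_add_transpose_nonneg hα1 hα2 hij)
    (fun i => sum_Gmat_add_transpose_nonpos hα1 hα2 i) v
  linarith

lemma crankNicolson_Gmat_energy_le (hα1 : 1 < α) (hα2 : α < 2) {h τ : ℝ} (hh : 0 ≤ h)
    (hτ : 0 < τ) {d : Fin M → ℝ} (hd : ∀ i, 0 < d i) {u v f : Fin M → ℝ}
    (hscheme : (1 / τ) • (v - u) =
      (1 / (2 * h ^ α)) • (diagonal d *ᵥ (Gmat α M *ᵥ (u + v))) + f) :
    (2 - τ) * (v ⬝ᵥ (diagonal (fun i => (d i)⁻¹) *ᵥ v)) ≤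
      (2 + τ) * (u ⬝ᵥ (diagonal (fun i => (d i)⁻¹) *ᵥ u)) +
        2 * τ * (f ⬝ᵥ (diagonal (fun i => (d i)⁻¹) *ᵥ f)) := by
  have hDinv : (diagonal fun i => (d i)⁻¹).PosSemidef :=
    posSemidef_diagonal_iff.2 fun i => (inv_pos.2 (hd i)).le
  have hDinvD : (diagonal fun i => (d i)⁻¹) * diagonal d = 1 := by
    rw [diagonal_mul_diagonal, ← diagonal_one]
    exact congrArg diagonal (funext fun i => inv_mul_cancel₀ (hd i).ne')
  rw [mulVec_mulVec, ← smul_mulVec] at hscheme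
  refine hDinv.crankNicolson_energy_le (fun x => ?_) hτ hscheme
  rw [mul_smul_comm, ← mul_assoc, hDinvD, one_mul, smul_mulVec, dotProduct_smul, smul_eq_mul]
  exact mul_nonpos_of_nonneg_of_nonpos (by positivity) (dotProduct_Gmat_mulVec_nonpos hα1 hα2 x)

end Gmat

theorem CN_scheme_stability_general (α T : ℝ) (hα : α ∈ Set.Ioo (1 : ℝ) 2) (hT : 0 < T)
    (N M : ℕ) (hτ : T / N ≤ 1)
    (h : ℝ) (hh : 0 < h) (d : Fin M → ℝ) (hd : ∀ i, 0 < d i)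
    (u f : ℕ → Fin M → ℝ) (φ : Fin M → ℝ) (hu0 : u 0 = φ)
    (heq : ∀ n, 1 ≤ n → n ≤ N →
      (1 / (T / N)) • (u n - u (n - 1)) =
        (1 / (2 * h ^ α)) • (Matrix.diagonal d *ᵥ (Gmat α M *ᵥ (u (n - 1) + u n))) + f n) :
    ∀ n, ∀ hn1 : 1 ≤ n, n ≤ N →
      h * (u n ⬝ᵥ (Matrix.diagonal (fun i => (d i)⁻¹) *ᵥ u n)) ≤
        Real.exp (2 * T) * (h * (φ ⬝ᵥ (Matrix.diagonal (fun i => (d i)⁻¹) *ᵥ φ))) +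
        (Real.exp (2 * T) - 1) *
          (Finset.Icc 1 n).sup' (Finset.nonempty_Icc.mpr hn1)
            (fun k => h * (f k ⬝ᵥ (Matrix.diagonal (fun i => (d i)⁻¹) *ᵥ f k))) := by
  intro n hn1 hn2
  set τ := T / N
  set Q := fun k => h * (u k ⬝ᵥ (diagonal (fun i => (d i)⁻¹) *ᵥ u k))
  set F := fun k => h * (f k ⬝ᵥ (diagonal (fun i => (d i)⁻¹) *ᵥ f k))
  set B := (Icc 1 n).sup' (nonempty_Icc.mpr hn1) F
  have hN : (0 : ℝ) < N := by exact_mod_cast hn1.trans hn2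
  have hτ0 : 0 < τ := div_pos hT hN
  have hstep : ∀ k < n,
      (2 - τ) * Q (k + 1) ≤ (2 + τ) * Q k + ((2 + τ) - (2 - τ)) * F (k + 1) := by
    intro k hk
    have hscheme := heq (k + 1) (by omega) (by omega)
    rw [Nat.add_sub_cancel] at hscheme
    have := crankNicolson_Gmat_energy_le hα.1 hα.2 hh.le hτ0 hd hscheme
    linear_combination h * this
  have hF : ∀ k < n, F (k + 1) ≤ B := fun k hk => le_sup' F (mem_Icc.2 ⟨by omega, by omega⟩)
  have hgronwall := discrete_gronwall_pow (by linarith) (by linarith) hstep hF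
  have hpow : ((2 + τ) / (2 - τ)) ^ n ≤ Real.exp (2 * T) := by
    refine (two_add_div_two_sub_pow_le_exp hτ0.le hτ n).trans (Real.exp_le_exp.2 ?_)
    calc 2 * (n * τ) ≤ 2 * (N * τ) := by gcongr
      _ = 2 * T := by rw [mul_div_cancel₀ T hN.ne']
  have hDinv : (diagonal fun i => (d i)⁻¹).PosSemidef :=
    posSemidef_diagonal_iff.2 fun i => (inv_pos.2 (hd i)).le
  have hQ0 : 0 ≤ Q 0 := mul_nonneg hh.le (hDinv.dotProduct_mulVec_nonneg _)
  have hB : 0 ≤ B := (mul_nonneg hh.le (hDinv.dotProduct_mulVec_nonneg _)).trans (hF 0 (by omega))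
  rw [← hu0]
  linarith [mul_le_mul_of_nonneg_right hpow (add_nonneg hQ0 hB)]

/-- Unconditional stability (Theorem 2.1): for the Crank–Nicolson/WSGD scheme
`(uⁿ − uⁿ⁻¹)/τ = (1/(2hᵅ)) D G_α (uⁿ⁻¹ + uⁿ) + fⁿ⁻¹ᐟ²` with `τ = T/N ≤ 1`,
`‖uⁿ‖²_{D⁻¹} ≤ e^{2T} ‖φ‖²_{D⁻¹} + (e^{2T} − 1) max_{1≤k≤n} ‖fᵏ⁻¹ᐟ²‖²_{D⁻¹}`,
where `‖w‖²_{D⁻¹} = h wᵀ D⁻¹ w` and `f k` stands for `f^{k−1/2}`. -/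
theorem CN_scheme_stability (α T : ℝ) (hα : α ∈ Set.Ioo (1 : ℝ) 2) (hT : 0 < T)
    (N M : ℕ) (hN : 0 < N) (hM : 0 < M) (hτ : T / N ≤ 1)
    (h : ℝ) (hh : 0 < h) (d : Fin M → ℝ) (hd : ∀ i, 0 < d i)
    (u f : ℕ → Fin M → ℝ) (φ : Fin M → ℝ) (hu0 : u 0 = φ)
    (heq : ∀ n, 1 ≤ n → n ≤ N →
      (1 / (T / N)) • (u n - u (n - 1)) =
        (1 / (2 * h ^ α)) • (Matrix.diagonal d *ᵥ (Gmat α M *ᵥ (u (n - 1) + u n))) + f n) :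
    ∀ n, ∀ hn1 : 1 ≤ n, n ≤ N →
      h * (u n ⬝ᵥ (Matrix.diagonal (fun i => (d i)⁻¹) *ᵥ u n)) ≤
        Real.exp (2 * T) * (h * (φ ⬝ᵥ (Matrix.diagonal (fun i => (d i)⁻¹) *ᵥ φ))) +
        (Real.exp (2 * T) - 1) *
          (Finset.Icc 1 n).sup' (Finset.nonempty_Icc.mpr hn1)
            (fun k => h * (f k ⬝ᵥ (Matrix.diagonal (fun i => (d i)⁻¹) *ᵥ f k))) :=
  CN_scheme_stability_general α T hα hT N M hτ h hh d hd u f φ hu0 heq
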